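/- Let {X_𝔞}_{𝔞∈[𝔞₋,𝔞₊]} be a scale of Banach spaces, let F be an Ovsjannikov map of order q with 0 ≤ q < 1 and constant L > 0, and fix T > 0 and x₀ ∈ X_{𝔞₋}. Then there exists a unique map f : [0,T] → ⋂_{𝔞∈(𝔞₋,𝔞₊)} X_𝔞 such that for every 𝔞 ∈ (𝔞₋, 𝔞₊) the map f : [0,T] → X_𝔞 is continuous and f(t) = x₀ + ∫₀ᵗ F(f(s)) ds for all t ∈ [0,T], the integral being a Bochner integral in X_𝔞. -/

import Mathlib

open MeasureTheory Set Filter ENNReal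

noncomputable section

/-- `f : [0,T] → X_a` is continuous, where `X_a` is the subspace of the ambient Banach
space `E` on which the extended norm `N a` is finite, with the metric induced by `N a`. -/
def ScaleContOn {E : Type*} [NormedAddCommGroup E]
    (N : ℝ → E → ℝ≥0∞) (a T : ℝ) (f : ℝ → E) : Prop :=
  (∀ t ∈ Icc (0 : ℝ) T, N a (f t) ≠ ⊤) ∧
  ∀ t₀ ∈ Icc (0 : ℝ) T,
    Tendsto (fun t => N a (f t - f t₀)) (nhdsWithin t₀ (Icc (0 : ℝ) T)) (nhds 0)

/-- The map `ℐ(f)(t) = x₀ + ∫₀ᵗ F(f(s)) ds` (Bochner integral in the ambient space). -/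
def Imap {E : Type*} [NormedAddCommGroup E] [NormedSpace ℝ E] [CompleteSpace E]
    (F : E → E) (x₀ : E) (f : ℝ → E) : ℝ → E :=
  fun t => x₀ + ∫ s in (0 : ℝ)..t, F (f s)

/-
Each `X_a` is a Banach space (`ENormSpace (N a)`) continuously embedded in `E`, so a Bochner
integral in `E` of a curve that is continuous into `X_a` lies in `X_a`, with
`N a (∫₀ᵗ g) ≤ ∫₀ᵗ N a (g s) ds`. The solution is the limit of the Picard iterates. Their `n`-th
difference is estimated in `X_a` by starting at a level `a₁ < a` and raising the level by
`δ / n` (`δ = a - a₁`) at each of the `n` steps: every step costs a factor `L (n / δ) ^ q` and one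
integration in time, so the `n`-th difference is at most `M (L T n ^ q / δ ^ q) ^ n / n!`. Since
`q < 1` and `n ^ n / n! ≤ eⁿ`, these bounds are summable. Applied to the difference of two
solutions, the same estimate tends to `0`, which gives uniqueness.
-/

open scoped Nat Topology

section

variable {E : Type*} [NormedAddCommGroup E]

structure IsOvsjannikovMap (N : ℝ → E → ℝ≥0∞) (amin amax q L : ℝ) (F : E → E) : Prop where
  mapsTo : ∀ a b : ℝ, amin ≤ a → a < b → b ≤ amax → ∀ x : E, N a x ≠ ⊤ → N b (F x) ≠ ⊤
  lipschitz : ∀ a b : ℝ, amin ≤ a → a < b → b ≤ amax → ∀ x y : E, N a x ≠ ⊤ → N a y ≠ ⊤ →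
    N b (F x - F y) ≤ ENNReal.ofReal (L / (b - a) ^ q) * N a (x - y)

theorem ScaleContOn.comp_ovsjannikovMap {N : ℝ → E → ℝ≥0∞} {amin amax q L T : ℝ} {F : E → E}
    (hF : IsOvsjannikovMap N amin amax q L F) {a b : ℝ}
    (ha : amin ≤ a) (hab : a < b) (hb : b ≤ amax) {f : ℝ → E} (hf : ScaleContOn N a T f) :
    ScaleContOn N b T (F ∘ f) := by
  refine ⟨fun t ht => hF.mapsTo a b ha hab hb _ (hf.1 t ht), fun t₀ ht₀ => ?_⟩
  have hlim := ENNReal.Tendsto.const_mul (hf.2 t₀ ht₀) (.inr (ofReal_ne_top (r := L / (b - a) ^ q)))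
  rw [mul_zero] at hlim
  refine tendsto_of_tendsto_of_tendsto_of_le_of_le' tendsto_const_nhds hlim
    (.of_forall fun _ => zero_le) ?_
  filter_upwards [self_mem_nhdsWithin] with t ht
  exact hF.lipschitz a b ha hab hb _ _ (hf.1 t ht) (hf.1 t₀ ht₀)

variable [NormedSpace ℝ E]

structure IsScale (N : ℝ → E → ℝ≥0∞) (amin amax : ℝ) : Prop where
  top_eq : ∀ x : E, N amax x = (‖x‖₊ : ℝ≥0∞)
  antitone : ∀ a b : ℝ, amin ≤ a → a ≤ b → b ≤ amax → ∀ x : E, N b x ≤ N a x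
  add_le : ∀ a : ℝ, amin ≤ a → a ≤ amax → ∀ x y : E, N a (x + y) ≤ N a x + N a y
  smul_eq : ∀ a : ℝ, amin ≤ a → a ≤ amax → ∀ (c : ℝ) (x : E),
    N a (c • x) = (‖c‖₊ : ℝ≥0∞) * N a x
  complete : ∀ a : ℝ, amin ≤ a → a ≤ amax → ∀ u : ℕ → E,
    (∀ n, N a (u n) ≠ ⊤) →
    (∀ ε : ℝ≥0∞, 0 < ε → ∃ K : ℕ, ∀ m ≥ K, ∀ n ≥ K, N a (u m - u n) < ε) →
    ∃ x : E, N a x ≠ ⊤ ∧ Tendsto (fun n => N a (u n - x)) atTop (nhds 0)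

class IsBanachENorm (ν : E → ℝ≥0∞) : Prop where
  add_le : ∀ x y : E, ν (x + y) ≤ ν x + ν y
  smul_eq : ∀ (c : ℝ) (x : E), ν (c • x) = (‖c‖₊ : ℝ≥0∞) * ν x
  nnnorm_le : ∀ x : E, (‖x‖₊ : ℝ≥0∞) ≤ ν x
  complete : ∀ u : ℕ → E, (∀ n, ν (u n) ≠ ⊤) →
    (∀ ε : ℝ≥0∞, 0 < ε → ∃ K : ℕ, ∀ m ≥ K, ∀ n ≥ K, ν (u m - u n) < ε) →
    ∃ x : E, ν x ≠ ⊤ ∧ Tendsto (fun n => ν (u n - x)) atTop (nhds 0)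

namespace IsBanachENorm

variable (ν : E → ℝ≥0∞) [IsBanachENorm ν]

protected theorem map_zero : ν 0 = 0 := by
  simpa using smul_eq (ν := ν) 0 0

protected theorem map_neg (x : E) : ν (-x) = ν x := by
  simpa using smul_eq (ν := ν) (-1) x

theorem map_sub_comm (x y : E) : ν (x - y) = ν (y - x) := by
  rw [← neg_sub, IsBanachENorm.map_neg ν]

theorem map_sub_le (x y z : E) : ν (x - z) ≤ ν (x - y) + ν (y - z) := by
  simpa using add_le (ν := ν) (x - y) (y - z)

theorem enorm_le (x : E) : ‖x‖ₑ ≤ ν x := nnnorm_le x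

def finiteSubmodule : Submodule ℝ E where
  carrier := {x | ν x ≠ ⊤}
  add_mem' {x y} hx hy := ne_top_of_le_ne_top (add_ne_top.2 ⟨hx, hy⟩) (add_le x y)
  zero_mem' := by simp [IsBanachENorm.map_zero]
  smul_mem' c x hx := by simpa [smul_eq] using mul_ne_top coe_ne_top hx

end IsBanachENorm

open IsBanachENorm

def ENormSpace (ν : E → ℝ≥0∞) [IsBanachENorm ν] : Type _ := finiteSubmodule ν

namespace ENormSpace

variable {ν : E → ℝ≥0∞} [IsBanachENorm ν]

instance : AddCommGroup (ENormSpace ν) := inferInstanceAs (AddCommGroup (finiteSubmodule ν))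

instance : Module ℝ (ENormSpace ν) := inferInstanceAs (Module ℝ (finiteSubmodule ν))

variable (ν) in
def incl : ENormSpace ν →ₗ[ℝ] E := (finiteSubmodule ν).subtype

def mk (x : E) (hx : ν x ≠ ⊤) : ENormSpace ν := (⟨x, hx⟩ : finiteSubmodule ν)

@[simp] theorem incl_mk (x : E) (hx : ν x ≠ ⊤) : incl ν (mk x hx) = x := rfl

theorem map_incl_ne_top (x : ENormSpace ν) : ν (incl ν x) ≠ ⊤ := (x : finiteSubmodule ν).2

theorem incl_injective : Function.Injective (incl ν) := Subtype.val_injective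

instance : Norm (ENormSpace ν) := ⟨fun x => (ν (incl ν x)).toReal⟩

theorem ofReal_norm_eq (x : ENormSpace ν) : ENNReal.ofReal ‖x‖ = ν (incl ν x) :=
  ofReal_toReal (map_incl_ne_top x)

instance : NormedAddCommGroup (ENormSpace ν) :=
  NormedAddCommGroup.ofCore (𝕜 := ℝ)
  { norm_nonneg _ := toReal_nonneg
    norm_smul c x := by
      change (ν (incl ν (c • x))).toReal = _
      rw [map_smul, smul_eq (ν := ν), toReal_mul]
      rfl
    norm_triangle x y := by
      change (ν (incl ν (x + y))).toReal ≤ (ν (incl ν x)).toReal + (ν (incl ν y)).toReal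
      rw [map_add, ← toReal_add (map_incl_ne_top x) (map_incl_ne_top y)]
      exact toReal_mono (add_ne_top.2 ⟨map_incl_ne_top x, map_incl_ne_top y⟩) (add_le _ _)
    norm_eq_zero_iff x := by
      refine ⟨fun hx => incl_injective ?_,
        fun hx => by simp [hx, Norm.norm, IsBanachENorm.map_zero]⟩
      have h0 : ν (incl ν x) = 0 := by
        rw [← ofReal_norm_eq x, hx, ofReal_zero]
      simpa using (enorm_le ν (incl ν x)).trans h0.le }

instance : NormedSpace ℝ (ENormSpace ν) where
  norm_smul_le c x := by
    change (ν (incl ν (c • x))).toReal ≤ _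
    rw [map_smul, smul_eq (ν := ν), toReal_mul]
    rfl

theorem enorm_eq (x : ENormSpace ν) : ‖x‖ₑ = ν (incl ν x) := by
  rw [← ofReal_norm_eq x, _root_.ofReal_norm]

theorem edist_eq (x y : ENormSpace ν) : edist x y = ν (incl ν x - incl ν y) := by
  rw [edist_eq_enorm_sub, enorm_eq, map_sub]

instance : CompleteSpace (ENormSpace ν) := by
  refine EMetric.complete_of_cauchySeq_tendsto fun u hu => ?_
  obtain ⟨x, hx, hux⟩ := complete (fun n => incl ν (u n)) (fun n => map_incl_ne_top (u n))
    (by simpa [edist_eq, ge_iff_le] using EMetric.cauchySeq_iff.1 hu)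
  exact ⟨mk x hx, tendsto_iff_edist_tendsto_0.2 (by simpa [edist_eq] using hux)⟩

variable (ν) in
def inclL : ENormSpace ν →L[ℝ] E :=
  (incl ν).mkContinuous 1 fun x => by
    rw [one_mul, ← ofReal_le_ofReal_iff (norm_nonneg _), ofReal_norm_eq x, _root_.ofReal_norm]
    exact enorm_le ν _

@[simp] theorem inclL_apply (x : ENormSpace ν) : inclL ν x = incl ν x := rfl

end ENormSpace

open ENormSpace

section Level

variable {N : ℝ → E → ℝ≥0∞} {a T : ℝ} {f g : ℝ → E} [IsBanachENorm (N a)]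

theorem scaleContOn_iff_exists_continuousOn : ScaleContOn N a T f ↔ ∃ G : ℝ → ENormSpace (N a),
    ContinuousOn G (Icc 0 T) ∧ ∀ t ∈ Icc (0 : ℝ) T, incl (N a) (G t) = f t := by
  constructor
  · rintro ⟨hfin, hcont⟩
    classical
    let G : ℝ → ENormSpace (N a) := fun t => if h : N a (f t) ≠ ⊤ then mk (f t) h else 0
    have hG : ∀ t ∈ Icc (0 : ℝ) T, incl (N a) (G t) = f t := fun t ht => by
      simp [G, hfin t ht]
    refine ⟨G, fun t₀ ht₀ => tendsto_iff_edist_tendsto_0.2 ?_, hG⟩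
    refine (hcont t₀ ht₀).congr' ?_
    filter_upwards [self_mem_nhdsWithin] with t ht
    rw [edist_eq, hG t ht, hG t₀ ht₀]
  · rintro ⟨G, hG, hGf⟩
    refine ⟨fun t ht => hGf t ht ▸ map_incl_ne_top (G t), fun t₀ ht₀ => ?_⟩
    refine (tendsto_iff_edist_tendsto_0.1 (hG t₀ ht₀)).congr' ?_
    filter_upwards [self_mem_nhdsWithin] with t ht
    rw [edist_eq, hGf t ht, hGf t₀ ht₀]

theorem scaleContOn_const {x : E} (hx : N a x ≠ ⊤) : ScaleContOn N a T fun _ => x :=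
  scaleContOn_iff_exists_continuousOn.2 ⟨fun _ => mk x hx, continuousOn_const, fun _ _ => rfl⟩

theorem ScaleContOn.add (hf : ScaleContOn N a T f) (hg : ScaleContOn N a T g) :
    ScaleContOn N a T (f + g) := by
  obtain ⟨F, hF, hFf⟩ := scaleContOn_iff_exists_continuousOn.1 hf
  obtain ⟨G, hG, hGg⟩ := scaleContOn_iff_exists_continuousOn.1 hg
  exact scaleContOn_iff_exists_continuousOn.2
    ⟨F + G, hF.add hG, fun t ht => by simp [hFf t ht, hGg t ht]⟩

theorem ScaleContOn.sub (hf : ScaleContOn N a T f) (hg : ScaleContOn N a T g) :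
    ScaleContOn N a T (f - g) := by
  obtain ⟨F, hF, hFf⟩ := scaleContOn_iff_exists_continuousOn.1 hf
  obtain ⟨G, hG, hGg⟩ := scaleContOn_iff_exists_continuousOn.1 hg
  exact scaleContOn_iff_exists_continuousOn.2
    ⟨F - G, hF.sub hG, fun t ht => by simp [hFf t ht, hGg t ht]⟩

theorem integral_eq_incl_integral [CompleteSpace E] {G : ℝ → ENormSpace (N a)}
    (hG : ContinuousOn G (Icc 0 T))
    (hGf : ∀ t ∈ Icc (0 : ℝ) T, incl (N a) (G t) = f t) {t : ℝ} (ht : t ∈ Icc 0 T) :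
    ∫ s in (0 : ℝ)..t, f s = incl (N a) (∫ s in (0 : ℝ)..t, G s) := by
  have hsub : uIcc 0 t ⊆ Icc 0 T := by
    rw [uIcc_of_le ht.1]
    exact Icc_subset_Icc_right ht.2
  rw [← inclL_apply, ← (inclL (N a)).intervalIntegral_comp_comm
    ((hG.mono hsub).intervalIntegrable)]
  exact intervalIntegral.integral_congr fun s hs => (hGf s (hsub hs)).symm

theorem ScaleContOn.intervalIntegrable [CompleteSpace E] (hf : ScaleContOn N a T f) {t : ℝ}
    (ht : t ∈ Icc 0 T) :
    IntervalIntegrable f volume 0 t := by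
  obtain ⟨G, hG, hGf⟩ := scaleContOn_iff_exists_continuousOn.1 hf
  have hsub : uIcc 0 t ⊆ Icc 0 T := by
    rw [uIcc_of_le ht.1]
    exact Icc_subset_Icc_right ht.2
  refine ContinuousOn.intervalIntegrable ?_
  exact ((inclL (N a)).continuous.comp_continuousOn (hG.mono hsub)).congr
    fun s hs => (hGf s (hsub hs)).symm

theorem ScaleContOn.primitive [CompleteSpace E] (hf : ScaleContOn N a T f) :
    ScaleContOn N a T fun t => ∫ s in (0 : ℝ)..t, f s := by
  obtain ⟨G, hG, hGf⟩ := scaleContOn_iff_exists_continuousOn.1 hf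
  refine scaleContOn_iff_exists_continuousOn.2 ⟨fun t => ∫ s in Ioc 0 t, G s,
    intervalIntegral.continuousOn_primitive (hG.integrableOn_Icc), fun t ht => ?_⟩
  rw [integral_eq_incl_integral hG hGf ht, intervalIntegral.integral_of_le ht.1]

theorem ScaleContOn.map_integral_le [CompleteSpace E] (hf : ScaleContOn N a T f) {t : ℝ}
    (ht : t ∈ Icc 0 T) :
    N a (∫ s in (0 : ℝ)..t, f s) ≤ ∫⁻ s in Ioc 0 t, N a (f s) := by
  obtain ⟨G, hG, hGf⟩ := scaleContOn_iff_exists_continuousOn.1 hf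
  rw [integral_eq_incl_integral hG hGf ht, ← enorm_eq (∫ s in (0 : ℝ)..t, G s),
    intervalIntegral.integral_of_le ht.1]
  refine (enorm_integral_le_lintegral_enorm _).trans_eq
    (setLIntegral_congr_fun measurableSet_Ioc ?_)
  intro s hs
  show ‖G s‖ₑ = N a (f s)
  rw [enorm_eq, hGf s (Ioc_subset_Icc_self.trans (Icc_subset_Icc_right ht.2) hs)]

theorem ScaleContOn.exists_bound (hf : ScaleContOn N a T f) :
    ∃ M : ℝ≥0∞, M ≠ ⊤ ∧ ∀ t ∈ Icc (0 : ℝ) T, N a (f t) ≤ M := by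
  obtain ⟨G, hG, hGf⟩ := scaleContOn_iff_exists_continuousOn.1 hf
  obtain ⟨C, hC⟩ := isCompact_Icc.exists_bound_of_continuousOn hG
  refine ⟨ENNReal.ofReal C, ofReal_ne_top, fun t ht => ?_⟩
  rw [← hGf t ht, ← ofReal_norm_eq (G t)]
  exact ofReal_le_ofReal (hC t ht)

theorem ScaleContOn.of_uniform_bound {u : ℕ → ℝ → E} (hu : ∀ n, ScaleContOn N a T (u n))
    {τ : ℕ → ℝ≥0∞}
    (hτ : Tendsto τ atTop (𝓝 0)) (hbound : ∀ n, ∀ t ∈ Icc (0 : ℝ) T, N a (u n t - f t) ≤ τ n) :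
    ScaleContOn N a T f := by
  refine ⟨fun t ht => ?_, fun t₀ ht₀ => ENNReal.tendsto_nhds_zero.2 fun ε hε => ?_⟩
  · obtain ⟨n, hn⟩ := (hτ.eventually (gt_mem_nhds zero_lt_one)).exists
    refine ne_top_of_le_ne_top (add_ne_top.2 ⟨((hbound n t ht).trans_lt (hn.trans one_lt_top)).ne,
      (hu n).1 t ht⟩) ?_
    simpa [map_sub_comm (N a) (u n t)] using map_sub_le (N a) (f t) (u n t) 0
  · have hε3 : 0 < ε / 3 := ENNReal.div_pos hε.ne' (ofNat_ne_top (n := 3))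
    obtain ⟨n, hn⟩ := (hτ.eventually (ge_mem_nhds hε3)).exists
    filter_upwards [self_mem_nhdsWithin,
      ENNReal.tendsto_nhds_zero.1 ((hu n).2 t₀ ht₀) (ε / 3) hε3] with t ht hclose
    calc N a (f t - f t₀)
        ≤ N a (f t - u n t) + N a (u n t - u n t₀) + N a (u n t₀ - f t₀) :=
          (map_sub_le _ _ (u n t₀) _).trans (add_le_add_left (map_sub_le _ _ _ _) _)
      _ ≤ ε / 3 + ε / 3 + ε / 3 := by
          gcongr
          · rw [map_sub_comm (N a)]
            exact (hbound n t ht).trans hn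
          · exact (hbound n t₀ ht₀).trans hn
      _ = ε := ENNReal.add_thirds ε

theorem IsBanachENorm.exists_tendsto_of_tsum_ne_top {ν : E → ℝ≥0∞} [IsBanachENorm ν]
    {v : ℕ → E} (hv : ∀ n, ν (v n) ≠ ⊤) {β : ℕ → ℝ≥0∞} (hβ : ∀ n, ν (v (n + 1) - v n) ≤ β n)
    (hsum : ∑' n, β n ≠ ⊤) : ∃ x, Tendsto v atTop (𝓝 x) ∧ ∀ n, ν (v n - x) ≤ ∑' m, β (n + m) := by
  let w n : ENormSpace ν := ENormSpace.mk (v n) (hv n)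
  have hw : ∀ n, edist (w n) (w (n + 1)) ≤ β n := fun n => by
    rw [edist_comm, edist_eq]
    exact hβ n
  obtain ⟨y, hy⟩ := cauchySeq_tendsto_of_complete (cauchySeq_of_edist_le_of_tsum_ne_top β hw hsum)
  refine ⟨incl ν y, ((inclL ν).continuous.tendsto y).comp hy, fun n => ?_⟩
  simpa [edist_eq, w] using edist_le_tsum_of_edist_le_of_tendsto β hw hy n

end Level

variable {N : ℝ → E → ℝ≥0∞} {amin amax q L T : ℝ} {F : E → E}

theorem IsScale.isBanachENorm (hN : IsScale N amin amax) {a : ℝ} (ha : amin ≤ a) (ha' : a ≤ amax) :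
    IsBanachENorm (N a) where
  add_le := hN.add_le a ha ha'
  smul_eq := hN.smul_eq a ha ha'
  nnnorm_le x := hN.top_eq x ▸ hN.antitone a amax ha ha' le_rfl x
  complete := hN.complete a ha ha'

theorem IsScale.ne_top_of_le (hN : IsScale N amin amax) {a b : ℝ} (ha : amin ≤ a) (hab : a ≤ b)
    (hb : b ≤ amax) {x : E} (hx : N a x ≠ ⊤) : N b x ≠ ⊤ :=
  ne_top_of_le_ne_top hx (hN.antitone a b ha hab hb x)

theorem ScaleContOn.imap [CompleteSpace E] (hN : IsScale N amin amax)
    (hF : IsOvsjannikovMap N amin amax q L F) {a b : ℝ} (ha : amin ≤ a) (hab : a < b)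
    (hb : b ≤ amax) {x₀ : E} (hx₀ : N b x₀ ≠ ⊤) {f : ℝ → E} (hf : ScaleContOn N a T f) :
    ScaleContOn N b T (Imap F x₀ f) := by
  have := hN.isBanachENorm (ha.trans hab.le) hb
  exact (scaleContOn_const hx₀).add (hf.comp_ovsjannikovMap hF ha hab hb).primitive

def picard [CompleteSpace E] (F : E → E) (x₀ : E) (n : ℕ) : ℝ → E :=
  (Imap F x₀)^[n] fun _ => x₀

theorem picard_succ [CompleteSpace E] (F : E → E) (x₀ : E) (n : ℕ) :
    picard F x₀ (n + 1) = Imap F x₀ (picard F x₀ n) :=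
  Function.iterate_succ_apply' _ _ _

theorem scaleContOn_picard [CompleteSpace E] (hN : IsScale N amin amax)
    (hF : IsOvsjannikovMap N amin amax q L F) {x₀ : E} (hx₀ : N amin x₀ ≠ ⊤) (n : ℕ) {a : ℝ}
    (ha : amin < a) (ha' : a ≤ amax) : ScaleContOn N a T (picard F x₀ n) := by
  induction n generalizing a with
  | zero =>
    have := hN.isBanachENorm ha.le ha'
    exact scaleContOn_const (hN.ne_top_of_le le_rfl ha.le ha' hx₀)
  | succ n ih =>
    rw [picard_succ]
    exact (ih (a := (amin + a) / 2) (by linarith) (by linarith)).imap hN hF (by linarith)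
      (by linarith) ha' (hN.ne_top_of_le le_rfl ha.le ha' hx₀)

theorem integral_mul_pow_div_factorial (C t : ℝ) (k : ℕ) :
    ∫ s in (0 : ℝ)..t, C * ((C * s) ^ k / k !) = (C * t) ^ (k + 1) / (k + 1)! := by
  have hterm : ∀ s : ℝ, C * ((C * s) ^ k / k !) = C ^ (k + 1) / k ! * s ^ k := fun s => by
    rw [mul_pow, pow_succ]
    ring
  simp_rw [hterm]
  rw [intervalIntegral.integral_const_mul, integral_pow, Nat.factorial_succ]
  push_cast
  field_simp
  ring

theorem setLIntegral_Ioc_mul_pow_div_factorial {C t : ℝ} (hC : 0 ≤ C) (ht : 0 ≤ t) (k : ℕ) :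
    ∫⁻ s in Ioc 0 t, ENNReal.ofReal C * ENNReal.ofReal ((C * s) ^ k / k !) =
      ENNReal.ofReal ((C * t) ^ (k + 1) / (k + 1)!) := by
  have hnonneg : ∀ s ∈ Ioc 0 t, 0 ≤ C * ((C * s) ^ k / k !) := fun s hs => by
    have := hs.1.le
    positivity
  rw [← integral_mul_pow_div_factorial, intervalIntegral.integral_of_le ht,
    ofReal_integral_eq_lintegral_ofReal]
  · exact setLIntegral_congr_fun measurableSet_Ioc fun s hs => (ofReal_mul hC).symm
  · exact (Continuous.integrableOn_Ioc (by fun_prop))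
  · exact (ae_restrict_iff' measurableSet_Ioc).2 (.of_forall hnonneg)

theorem summable_mul_rpow_pow_div_factorial (C : ℝ) {q : ℝ} (hq : q < 1) :
    Summable fun n : ℕ => (C * (n : ℝ) ^ q) ^ n / n ! := by
  have hlim : Tendsto (fun n : ℕ => |C| * Real.exp 1 * (n : ℝ) ^ (q - 1)) atTop (𝓝 0) := by
    have := (tendsto_rpow_neg_atTop (by linarith : 0 < 1 - q)).comp tendsto_natCast_atTop_atTop
    simpa [Function.comp_def] using this.const_mul (|C| * Real.exp 1)
  refine Summable.of_norm_bounded_eventually_nat summable_geometric_two ?_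
  filter_upwards [hlim.eventually (gt_mem_nhds (by norm_num : (0 : ℝ) < 1 / 2)),
    eventually_ge_atTop 1] with n hn hn1
  have hn0 : (0 : ℝ) < n := by exact_mod_cast hn1
  have hsplit : ‖(C * (n : ℝ) ^ q) ^ n / (n ! : ℝ)‖ =
      (|C| * (n : ℝ) ^ (q - 1)) ^ n * ((n : ℝ) ^ n / n !) := by
    rw [Real.norm_eq_abs, abs_div, abs_pow, abs_mul, Nat.abs_cast,
      abs_of_nonneg (Real.rpow_nonneg hn0.le q), Real.rpow_sub_one hn0.ne', mul_pow, mul_pow,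
      div_pow]
    field_simp
  rw [hsplit]
  calc (|C| * (n : ℝ) ^ (q - 1)) ^ n * ((n : ℝ) ^ n / n !)
      ≤ (|C| * (n : ℝ) ^ (q - 1)) ^ n * Real.exp 1 ^ n := by
        gcongr
        rw [← Real.exp_nat_mul, mul_one]
        exact Real.pow_div_factorial_le_exp _ hn0.le _
    _ = (|C| * Real.exp 1 * (n : ℝ) ^ (q - 1)) ^ n := by ring
    _ ≤ (1 / 2) ^ n := by gcongr

theorem IsOvsjannikovMap.map_imap_sub_imap_le [CompleteSpace E] (hN : IsScale N amin amax)
    (hF : IsOvsjannikovMap N amin amax q L F) (hL : 0 ≤ L) {x₀ : E} {b ε : ℝ} (hb : amin < b)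
    (hε : 0 < ε) (hbε : b + ε ≤ amax) {x y : ℝ → E} (hx : ScaleContOn N b T x)
    (hy : ScaleContOn N b T y) {M : ℝ≥0∞} {k : ℕ}
    (hM : ∀ s ∈ Icc (0 : ℝ) T, N b (x s - y s) ≤ M * ENNReal.ofReal ((L / ε ^ q * s) ^ k / k !))
    {t : ℝ} (ht : t ∈ Icc 0 T) :
    N (b + ε) (Imap F x₀ x t - Imap F x₀ y t) ≤
      M * ENNReal.ofReal ((L / ε ^ q * t) ^ (k + 1) / (k + 1)!) := by
  set C := L / ε ^ q
  have hC : 0 ≤ C := div_nonneg hL (Real.rpow_nonneg hε.le q)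
  have := hN.isBanachENorm (hb.le.trans (by linarith)) hbε
  have hFx := hx.comp_ovsjannikovMap hF hb.le (by linarith) hbε
  have hFy := hy.comp_ovsjannikovMap hF hb.le (by linarith) hbε
  have hdiff : Imap F x₀ x t - Imap F x₀ y t = ∫ s in (0 : ℝ)..t, (F ∘ x - F ∘ y) s := by
    rw [Imap, Imap, add_sub_add_left_eq_sub]
    exact (intervalIntegral.integral_sub (hFx.intervalIntegrable ht)
      (hFy.intervalIntegrable ht)).symm
  have hstep : ∀ s ∈ Ioc 0 t, N (b + ε) ((F ∘ x - F ∘ y) s) ≤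
      M * (ENNReal.ofReal C * ENNReal.ofReal ((C * s) ^ k / k !)) := fun s hs => by
    have hs' : s ∈ Icc 0 T := ⟨hs.1.le, hs.2.trans ht.2⟩
    calc N (b + ε) (F (x s) - F (y s))
        ≤ ENNReal.ofReal (L / (b + ε - b) ^ q) * N b (x s - y s) :=
          hF.lipschitz b (b + ε) hb.le (by linarith) hbε _ _ (hx.1 s hs') (hy.1 s hs')
      _ ≤ ENNReal.ofReal C * (M * ENNReal.ofReal ((C * s) ^ k / k !)) := by
          rw [add_sub_cancel_left]
          exact mul_le_mul_right (hM s hs') _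
      _ = M * (ENNReal.ofReal C * ENNReal.ofReal ((C * s) ^ k / k !)) := mul_left_comm _ _ _
  rw [hdiff]
  calc N (b + ε) (∫ s in (0 : ℝ)..t, (F ∘ x - F ∘ y) s)
      ≤ ∫⁻ s in Ioc 0 t, N (b + ε) ((F ∘ x - F ∘ y) s) := (hFx.sub hFy).map_integral_le ht
    _ ≤ ∫⁻ s in Ioc 0 t, M * (ENNReal.ofReal C * ENNReal.ofReal ((C * s) ^ k / k !)) :=
        setLIntegral_mono (by fun_prop) hstep
    _ = M * ENNReal.ofReal ((C * t) ^ (k + 1) / (k + 1)!) := by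
        rw [lintegral_const_mul _ (by fun_prop), setLIntegral_Ioc_mul_pow_div_factorial hC ht.1]

theorem IsOvsjannikovMap.map_sub_le_of_imap_succ [CompleteSpace E] (hN : IsScale N amin amax)
    (hF : IsOvsjannikovMap N amin amax q L F) (hL : 0 ≤ L) {x₀ : E} {x y : ℕ → ℝ → E}
    (hx : ∀ k a, amin < a → a < amax → ScaleContOn N a T (x k))
    (hy : ∀ k a, amin < a → a < amax → ScaleContOn N a T (y k))
    (hxI : ∀ k, ∀ t ∈ Icc (0 : ℝ) T, x (k + 1) t = Imap F x₀ (x k) t)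
    (hyI : ∀ k, ∀ t ∈ Icc (0 : ℝ) T, y (k + 1) t = Imap F x₀ (y k) t)
    {a₁ δ : ℝ} {M : ℝ≥0∞} (ha₁ : amin < a₁) (hδ : 0 < δ) (hδ' : a₁ + δ ≤ amax)
    (hM : ∀ t ∈ Icc (0 : ℝ) T, N a₁ (x 0 t - y 0 t) ≤ M) (n : ℕ) {t : ℝ} (ht : t ∈ Icc 0 T) :
    N (a₁ + δ) (x n t - y n t) ≤ M * ENNReal.ofReal ((L * T / δ ^ q * (n : ℝ) ^ q) ^ n / n !) := by
  have hn0 : 0 ≤ (n : ℝ) * (δ / n) := by positivity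
  have hnδ : a₁ + n * (δ / n) ≤ a₁ + δ := by
    rcases n.eq_zero_or_pos with rfl | hn
    · simpa using hδ.le
    · rw [mul_div_cancel₀ _ (by positivity)]
  have hchain : ∀ k ≤ n, ∀ t ∈ Icc (0 : ℝ) T, N (a₁ + k * (δ / n)) (x k t - y k t) ≤
      M * ENNReal.ofReal ((L / (δ / n) ^ q * t) ^ k / k !) := by
    intro k
    induction k with
    | zero => simpa using hM
    | succ k ih =>
      intro hk t ht
      have hkδ : ((k + 1 : ℕ) : ℝ) * (δ / n) ≤ n * (δ / n) := by gcongr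
      have hε : 0 < δ / n := div_pos hδ (by exact_mod_cast (by omega : 0 < n))
      have hk0 : 0 ≤ (k : ℝ) * (δ / n) := by positivity
      have hb : amin < a₁ + k * (δ / n) := by linarith
      have hbε : a₁ + k * (δ / n) + δ / n ≤ amax := by push_cast at hkδ; linarith
      rw [Nat.cast_succ, add_one_mul, ← add_assoc, hxI k t ht, hyI k t ht]
      exact hF.map_imap_sub_imap_le hN hL hb hε hbε
        (hx k _ hb (by linarith)) (hy k _ hb (by linarith)) (ih (by omega)) ht
  have hterm : (L / (δ / n) ^ q * t) ^ n / n ! ≤ (L * T / δ ^ q * (n : ℝ) ^ q) ^ n / n ! := by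
    have hC : 0 ≤ L * (n : ℝ) ^ q / δ ^ q := by positivity
    rw [Real.div_rpow hδ.le n.cast_nonneg, div_div_eq_mul_div,
      show L * T / δ ^ q * (n : ℝ) ^ q = L * (n : ℝ) ^ q / δ ^ q * T by ring]
    gcongr
    exacts [mul_nonneg hC ht.1, ht.2]
  calc N (a₁ + δ) (x n t - y n t)
      ≤ N (a₁ + n * (δ / n)) (x n t - y n t) := hN.antitone _ _ (by linarith) hnδ hδ' _
    _ ≤ M * ENNReal.ofReal ((L / (δ / n) ^ q * t) ^ n / n !) := hchain n le_rfl t ht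
    _ ≤ M * ENNReal.ofReal ((L * T / δ ^ q * (n : ℝ) ^ q) ^ n / n !) := by gcongr

def picardLimit [CompleteSpace E] (F : E → E) (x₀ : E) (t : ℝ) : E :=
  limUnder atTop fun n => picard F x₀ n t

theorem IsOvsjannikovMap.tendsto_picard [CompleteSpace E] (hN : IsScale N amin amax)
    (hF : IsOvsjannikovMap N amin amax q L F) (hL : 0 ≤ L) (hq : q < 1) {x₀ : E}
    (hx₀ : N amin x₀ ≠ ⊤) {a : ℝ} (ha : amin < a) (ha' : a < amax) :
    (∀ t ∈ Icc (0 : ℝ) T, Tendsto (fun n => picard F x₀ n t) atTop (𝓝 (picardLimit F x₀ t))) ∧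
    ∃ τ : ℕ → ℝ≥0∞, Tendsto τ atTop (𝓝 0) ∧
      ∀ n, ∀ t ∈ Icc (0 : ℝ) T, N a (picard F x₀ n t - picardLimit F x₀ t) ≤ τ n := by
  obtain ⟨a₁, ha₁, ha₁a⟩ := exists_between ha
  have ha₁' : a₁ < amax := ha₁a.trans ha'
  have hu : ∀ n b, amin < b → b < amax → ScaleContOn N b T (picard F x₀ n) :=
    fun n b hb hb' => scaleContOn_picard hN hF hx₀ n hb hb'.le
  have := hN.isBanachENorm ha₁.le ha₁'.le
  obtain ⟨M, hM, hMb⟩ := ((hu 1 a₁ ha₁ ha₁').sub (hu 0 a₁ ha₁ ha₁')).exists_bound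
  let β : ℕ → ℝ≥0∞ := fun k => M * ENNReal.ofReal ((L * T / (a - a₁) ^ q * (k : ℝ) ^ q) ^ k / k !)
  have hβ : ∀ k, ∀ t ∈ Icc (0 : ℝ) T, N a (picard F x₀ (k + 1) t - picard F x₀ k t) ≤ β k := by
    intro k t ht
    have := hF.map_sub_le_of_imap_succ hN hL (x := fun k => picard F x₀ (k + 1))
      (fun k => hu (k + 1)) (fun k => hu k) (fun k t _ => congrFun (picard_succ F x₀ (k + 1)) t)
      (fun k t _ => congrFun (picard_succ F x₀ k) t) ha₁ (sub_pos.2 ha₁a) (by linarith) hMb k ht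
    rwa [add_sub_cancel] at this
  have hsum : ∑' k, β k ≠ ⊤ := by
    rw [ENNReal.tsum_mul_left]
    exact mul_ne_top hM (summable_mul_rpow_pow_div_factorial _ hq).tsum_ofReal_ne_top
  have := hN.isBanachENorm ha.le ha'.le
  have hlim : ∀ t ∈ Icc (0 : ℝ) T,
      Tendsto (fun n => picard F x₀ n t) atTop (𝓝 (picardLimit F x₀ t)) ∧
      ∀ n, N a (picard F x₀ n t - picardLimit F x₀ t) ≤ ∑' m, β (n + m) := fun t ht => by
    obtain ⟨x, hx, hxβ⟩ := IsBanachENorm.exists_tendsto_of_tsum_ne_top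
      (fun n => (hu n a ha ha').1 t ht) (fun k => hβ k t ht) hsum
    rw [picardLimit, hx.limUnder_eq]
    exact ⟨hx, hxβ⟩
  refine ⟨fun t ht => (hlim t ht).1, fun n => ∑' m, β (n + m), ?_, fun n t ht => (hlim t ht).2 n⟩
  simpa only [add_comm] using ENNReal.tendsto_sum_nat_add β hsum

theorem IsOvsjannikovMap.tendsto_imap [CompleteSpace E] (hN : IsScale N amin amax)
    (hF : IsOvsjannikovMap N amin amax q L F) {a : ℝ} (ha : amin < a) (ha' : a < amax)
    {u : ℕ → ℝ → E} {f : ℝ → E} (hu : ∀ n, ScaleContOn N a T (u n)) (hf : ScaleContOn N a T f)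
    {τ : ℕ → ℝ≥0∞} (hτ : Tendsto τ atTop (𝓝 0))
    (hbound : ∀ n, ∀ t ∈ Icc (0 : ℝ) T, N a (u n t - f t) ≤ τ n) (x₀ : E) {t : ℝ}
    (ht : t ∈ Icc 0 T) : Tendsto (fun n => Imap F x₀ (u n) t) atTop (𝓝 (Imap F x₀ f t)) := by
  have := hN.isBanachENorm (ha.trans ha').le le_rfl
  set C := ENNReal.ofReal (L / (amax - a) ^ q)
  have hFu n := (hu n).comp_ovsjannikovMap hF ha.le ha' le_rfl
  have hFf := hf.comp_ovsjannikovMap hF ha.le ha' le_rfl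
  have hlim : Tendsto (fun n => C * τ n * volume (Ioc 0 t)) atTop (𝓝 0) := by
    have := ENNReal.Tendsto.mul_const (b := volume (Ioc 0 t))
      (ENNReal.Tendsto.const_mul (a := C) hτ (.inr ofReal_ne_top)) (.inr measure_Ioc_lt_top.ne)
    rwa [mul_zero, zero_mul] at this
  refine tendsto_iff_edist_tendsto_0.2 (tendsto_of_tendsto_of_tendsto_of_le_of_le
    tendsto_const_nhds hlim (fun _ => zero_le) fun n => ?_)
  calc edist (Imap F x₀ (u n) t) (Imap F x₀ f t)
      = N amax (∫ s in (0 : ℝ)..t, (F ∘ u n - F ∘ f) s) := by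
        rw [edist_eq_enorm_sub, Imap, Imap, add_sub_add_left_eq_sub, enorm_eq_nnnorm,
          ← hN.top_eq]
        exact congrArg _ (intervalIntegral.integral_sub ((hFu n).intervalIntegrable ht)
          (hFf.intervalIntegrable ht)).symm
    _ ≤ ∫⁻ s in Ioc 0 t, N amax ((F ∘ u n - F ∘ f) s) := ((hFu n).sub hFf).map_integral_le ht
    _ ≤ ∫⁻ _ in Ioc 0 t, C * τ n := by
        refine setLIntegral_mono measurable_const fun s hs => ?_
        have hs' : s ∈ Icc 0 T := ⟨hs.1.le, hs.2.trans ht.2⟩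
        exact (hF.lipschitz a amax ha.le ha' le_rfl _ _ ((hu n).1 s hs') (hf.1 s hs')).trans
          (mul_le_mul_right (hbound n s hs') C)
    _ = C * τ n * volume (Ioc 0 t) := setLIntegral_const _ _

theorem IsOvsjannikovMap.picardLimit_spec [CompleteSpace E] (hN : IsScale N amin amax)
    (hF : IsOvsjannikovMap N amin amax q L F) (hL : 0 ≤ L) (hq : q < 1) (hminmax : amin < amax)
    {x₀ : E} (hx₀ : N amin x₀ ≠ ⊤) :
    (∀ a, amin < a → a < amax → ScaleContOn N a T (picardLimit F x₀)) ∧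
      ∀ t ∈ Icc (0 : ℝ) T, picardLimit F x₀ t = Imap F x₀ (picardLimit F x₀) t := by
  have hu : ∀ n a, amin < a → a < amax → ScaleContOn N a T (picard F x₀ n) :=
    fun n a ha ha' => scaleContOn_picard hN hF hx₀ n ha ha'.le
  have hcont : ∀ a, amin < a → a < amax → ScaleContOn N a T (picardLimit F x₀) := by
    intro a ha ha'
    obtain ⟨-, τ, hτ, hbound⟩ := hF.tendsto_picard (T := T) hN hL hq hx₀ ha ha'
    have := hN.isBanachENorm ha.le ha'.le
    exact .of_uniform_bound (fun n => hu n a ha ha') hτ hbound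
  refine ⟨hcont, fun t ht => ?_⟩
  obtain ⟨a, ha, ha'⟩ := exists_between hminmax
  obtain ⟨hlim, τ, hτ, hbound⟩ := hF.tendsto_picard hN hL hq hx₀ ha ha'
  refine tendsto_nhds_unique ((hlim t ht).comp (tendsto_add_atTop_nat 1)) ?_
  simp_rw [Function.comp_def, picard_succ]
  exact hF.tendsto_imap hN ha ha' (fun n => hu n a ha ha') (hcont a ha ha') hτ hbound x₀ ht

theorem IsOvsjannikovMap.eqOn_of_imap [CompleteSpace E] (hN : IsScale N amin amax)
    (hF : IsOvsjannikovMap N amin amax q L F) (hL : 0 ≤ L) (hq : q < 1) (hminmax : amin < amax)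
    {x₀ : E} {f g : ℝ → E} (hf : ∀ a, amin < a → a < amax → ScaleContOn N a T f)
    (hg : ∀ a, amin < a → a < amax → ScaleContOn N a T g)
    (hfI : ∀ t ∈ Icc (0 : ℝ) T, f t = Imap F x₀ f t)
    (hgI : ∀ t ∈ Icc (0 : ℝ) T, g t = Imap F x₀ g t) : EqOn g f (Icc 0 T) := by
  intro t ht
  obtain ⟨a₁, ha₁, ha₁'⟩ := exists_between hminmax
  have := hN.isBanachENorm ha₁.le ha₁'.le
  obtain ⟨M, hM, hMb⟩ := ((hg a₁ ha₁ ha₁').sub (hf a₁ ha₁ ha₁')).exists_bound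
  have hbound : ∀ n : ℕ, ‖g t - f t‖ₑ ≤
      M * ENNReal.ofReal ((L * T / (amax - a₁) ^ q * (n : ℝ) ^ q) ^ n / n !) := fun n => by
    have := hF.map_sub_le_of_imap_succ hN hL (x := fun _ => g) (y := fun _ => f) (fun _ => hg)
      (fun _ => hf) (fun _ => hgI) (fun _ => hfI) ha₁ (sub_pos.2 ha₁') (by linarith) hMb n ht
    rwa [add_sub_cancel, hN.top_eq] at this
  have hlim := ENNReal.Tendsto.const_mul (ENNReal.tendsto_ofReal
    (summable_mul_rpow_pow_div_factorial (L * T / (amax - a₁) ^ q) hq).tendsto_atTop_zero)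
    (.inr hM)
  rw [ofReal_zero, mul_zero] at hlim
  exact sub_eq_zero.1 (enorm_eq_zero.1 (le_antisymm (ge_of_tendsto' hlim hbound) zero_le))

end

theorem statement14_general
    -- the scale of Banach spaces, realised inside the ambient space `E = X_{amax}`
    (E : Type*) [NormedAddCommGroup E] [NormedSpace ℝ E] [CompleteSpace E]
    (amin amax : ℝ) (hminmax : amin < amax)
    (N : ℝ → E → ℝ≥0∞)
    (htop : ∀ x : E, N amax x = (‖x‖₊ : ℝ≥0∞))
    (hmono : ∀ a b : ℝ, amin ≤ a → a ≤ b → b ≤ amax → ∀ x : E, N b x ≤ N a x)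
    (hadd : ∀ a : ℝ, amin ≤ a → a ≤ amax → ∀ x y : E, N a (x + y) ≤ N a x + N a y)
    (hsmul : ∀ a : ℝ, amin ≤ a → a ≤ amax → ∀ (c : ℝ) (x : E),
      N a (c • x) = (‖c‖₊ : ℝ≥0∞) * N a x)
    (hcomplete : ∀ a : ℝ, amin ≤ a → a ≤ amax → ∀ u : ℕ → E,
      (∀ n, N a (u n) ≠ ⊤) →
      (∀ ε : ℝ≥0∞, 0 < ε → ∃ K : ℕ, ∀ m ≥ K, ∀ n ≥ K, N a (u m - u n) < ε) →
      ∃ x : E, N a x ≠ ⊤ ∧ Tendsto (fun n => N a (u n - x)) atTop (nhds 0))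
    -- the Ovsjannikov map `F` of order `q` and constant `L`
    (q L : ℝ) (hL : 0 < L) (F : E → E)
    (hFmap : ∀ a b : ℝ, amin ≤ a → a < b → b ≤ amax → ∀ x : E,
      N a x ≠ ⊤ → N b (F x) ≠ ⊤)
    (hFlip : ∀ a b : ℝ, amin ≤ a → a < b → b ≤ amax → ∀ x y : E,
      N a x ≠ ⊤ → N a y ≠ ⊤ →
      N b (F x - F y) ≤ ENNReal.ofReal (L / (b - a) ^ q) * N a (x - y))
    (T : ℝ) (x₀ : E) (hx₀ : N amin x₀ ≠ ⊤)
    (hq1 : q < 1) :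
    ∃ f : ℝ → E,
      (∀ a : ℝ, amin < a → a < amax → ScaleContOn N a T f) ∧
      (∀ t ∈ Icc (0 : ℝ) T, f t = x₀ + ∫ s in (0 : ℝ)..t, F (f s)) ∧
      (∀ g : ℝ → E, (∀ a : ℝ, amin < a → a < amax → ScaleContOn N a T g) →
        (∀ t ∈ Icc (0 : ℝ) T, g t = x₀ + ∫ s in (0 : ℝ)..t, F (g s)) →
        ∀ t ∈ Icc (0 : ℝ) T, g t = f t) := by
  have hN : IsScale N amin amax := ⟨htop, hmono, hadd, hsmul, hcomplete⟩
  have hF : IsOvsjannikovMap N amin amax q L F := ⟨hFmap, hFlip⟩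
  obtain ⟨hcont, hfix⟩ := hF.picardLimit_spec (T := T) hN hL.le hq1 hminmax hx₀
  exact ⟨picardLimit F x₀, hcont, hfix, fun g hg hgI =>
    hF.eqOn_of_imap hN hL.le hq1 hminmax hcont hg hfix hgI⟩

theorem statement14
    -- the scale of Banach spaces, realised inside the ambient space `E = X_{amax}`
    (E : Type*) [NormedAddCommGroup E] [NormedSpace ℝ E] [CompleteSpace E]
    (amin amax : ℝ) (hamin : 0 < amin) (hminmax : amin < amax)
    (N : ℝ → E → ℝ≥0∞)
    (htop : ∀ x : E, N amax x = (‖x‖₊ : ℝ≥0∞))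
    (hmono : ∀ a b : ℝ, amin ≤ a → a ≤ b → b ≤ amax → ∀ x : E, N b x ≤ N a x)
    (hzero : ∀ a : ℝ, amin ≤ a → a ≤ amax → N a 0 = 0)
    (hadd : ∀ a : ℝ, amin ≤ a → a ≤ amax → ∀ x y : E, N a (x + y) ≤ N a x + N a y)
    (hsmul : ∀ a : ℝ, amin ≤ a → a ≤ amax → ∀ (c : ℝ) (x : E),
      N a (c • x) = (‖c‖₊ : ℝ≥0∞) * N a x)
    (hcomplete : ∀ a : ℝ, amin ≤ a → a ≤ amax → ∀ u : ℕ → E,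
      (∀ n, N a (u n) ≠ ⊤) →
      (∀ ε : ℝ≥0∞, 0 < ε → ∃ K : ℕ, ∀ m ≥ K, ∀ n ≥ K, N a (u m - u n) < ε) →
      ∃ x : E, N a x ≠ ⊤ ∧ Tendsto (fun n => N a (u n - x)) atTop (nhds 0))
    -- the Ovsjannikov map `F` of order `q` and constant `L`
    (q L : ℝ) (hq : 0 ≤ q) (hL : 0 < L) (F : E → E)
    (hFmap : ∀ a b : ℝ, amin ≤ a → a < b → b ≤ amax → ∀ x : E,
      N a x ≠ ⊤ → N b (F x) ≠ ⊤)
    (hFlip : ∀ a b : ℝ, amin ≤ a → a < b → b ≤ amax → ∀ x y : E,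
      N a x ≠ ⊤ → N a y ≠ ⊤ →
      N b (F x - F y) ≤ ENNReal.ofReal (L / (b - a) ^ q) * N a (x - y))
    (T : ℝ) (hT : 0 < T) (x₀ : E) (hx₀ : N amin x₀ ≠ ⊤)
    (hq1 : q < 1) :
    ∃ f : ℝ → E,
      (∀ a : ℝ, amin < a → a < amax → ScaleContOn N a T f) ∧
      (∀ t ∈ Icc (0 : ℝ) T, f t = x₀ + ∫ s in (0 : ℝ)..t, F (f s)) ∧
      (∀ g : ℝ → E, (∀ a : ℝ, amin < a → a < amax → ScaleContOn N a T g) →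
        (∀ t ∈ Icc (0 : ℝ) T, g t = x₀ + ∫ s in (0 : ℝ)..t, F (g s)) →
        ∀ t ∈ Icc (0 : ℝ) T, g t = f t) :=
  statement14_general E amin amax hminmax N htop hmono hadd hsmul hcomplete q L hL F hFmap hFlip T
    x₀ hx₀ hq1

end
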